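/- If Γ ⊢_{IMCalc} φ, then Γᵗ ⊢_{IK₂} φᵗ, where (-)ᵗ is the modal translation of L into the bimodal language L₂ and Γᵗ = {ψᵗ : ψ ∈ Γ}. -/
import Mathlib


/-
Common formalisation of the syntax and semantics of the intuitionistic
monotone modal logic IM, its generalised Hilbert calculi, intuitionistic
neighbourhood models, IFOM-structures, and related constructions.
-/

namespace IMPaper

/-- Formulas of the monotone modal language L. -/
inductive Formula : Type
  | prop : ℕ → Formula
  | bot  : Formula
  | and  : Formula → Formula → Formula
  | or   : Formula → Formula → Formula
  | imp  : Formula → Formula → Formula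
  | box  : Formula → Formula
  | dia  : Formula → Formula
deriving DecidableEq

/-- Negation: ¬φ abbreviates φ → ⊥. -/
def Formula.neg (φ : Formula) : Formula := φ.imp .bot

/-- Top: ⊤ abbreviates ⊥ → ⊥. -/
def Formula.top : Formula := Formula.bot.imp .bot

/-- Substitution of formulas for proposition letters. -/
def Formula.subst (σ : ℕ → Formula) : Formula → Formula
  | .prop i   => σ i
  | .bot      => .bot
  | .and φ ψ  => .and (φ.subst σ) (ψ.subst σ)
  | .or φ ψ   => .or (φ.subst σ) (ψ.subst σ)
  | .imp φ ψ  => .imp (φ.subst σ) (ψ.subst σ)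
  | .box φ    => .box (φ.subst σ)
  | .dia φ    => .dia (φ.subst σ)

private def pp0 : Formula := .prop 0
private def pp1 : Formula := .prop 1
private def pp2 : Formula := .prop 2

/-- A standard axiomatisation of intuitionistic propositional logic. -/
def IpcAx : Set Formula :=
  { Formula.imp pp0 (.imp pp1 pp0),
    Formula.imp (.imp pp0 (.imp pp1 pp2)) (.imp (.imp pp0 pp1) (.imp pp0 pp2)),
    Formula.imp (.and pp0 pp1) pp0,
    Formula.imp (.and pp0 pp1) pp1,
    Formula.imp pp0 (.imp pp1 (.and pp0 pp1)),
    Formula.imp pp0 (.or pp0 pp1),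
    Formula.imp pp1 (.or pp0 pp1),
    Formula.imp (.imp pp0 pp2) (.imp (.imp pp1 pp2) (.imp (.or pp0 pp1) pp2)),
    Formula.imp .bot pp0 }

/-- All substitution instances of a set of formulas. -/
def Instances (Ax : Set Formula) : Set Formula :=
  {φ | ∃ ψ ∈ Ax, ∃ σ, φ = ψ.subst σ}

/-- 𝒜x: all substitution instances of Ax together with all substitution
instances of the axioms of intuitionistic propositional logic. -/
def ScrAx (Ax : Set Formula) : Set Formula := Instances Ax ∪ Instances IpcAx

/-- The generalised Hilbert calculus GHC(Ax). -/
inductive GHC (Ax : Set Formula) : Set Formula → Formula → Prop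
  | el {Γ : Set Formula} {φ : Formula} : φ ∈ Γ → GHC Ax Γ φ
  | ax {Γ : Set Formula} {φ : Formula} : φ ∈ ScrAx Ax → GHC Ax Γ φ
  | mp {Γ : Set Formula} {φ ψ : Formula} :
      GHC Ax Γ φ → GHC Ax Γ (φ.imp ψ) → GHC Ax Γ ψ
  | monBox {Γ : Set Formula} {φ ψ : Formula} :
      GHC Ax ∅ (φ.imp ψ) → GHC Ax Γ ((Formula.box φ).imp (Formula.box ψ))
  | monDia {Γ : Set Formula} {φ ψ : Formula} :
      GHC Ax ∅ (φ.imp ψ) → GHC Ax Γ ((Formula.dia φ).imp (Formula.dia ψ))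

/-- The axioms (neg_a) and (I_◇) of the calculus IMCalc. -/
def IMAx : Set Formula :=
  { Formula.imp ((Formula.box pp0).and (Formula.dia pp0.neg)) .bot,
    Formula.imp ((Formula.box Formula.top).imp (Formula.dia pp0)) (Formula.dia pp0) }

/-- Derivability in the calculus IMCalc = GHC({(□p ∧ ◇¬p) → ⊥, (□⊤ → ◇p) → ◇p}). -/
def IMC : Set Formula → Formula → Prop := GHC IMAx

/-- An intuitionistic neighbourhood: a partial function W ⇀ 𝒫(W), encoded as a
domain together with a (total) value function whose values matter on the domain. -/
structure Nbhd (W : Type) where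
  dom : Set W
  val : W → Set W

/-- The data of an intuitionistic neighbourhood model. -/
structure INStruct (W : Type) where
  le : W → W → Prop
  N : Set (Nbhd W)
  V : ℕ → Set W

variable {W W' : Type}

/-- A set is upward closed w.r.t. the order of the structure. -/
def INStruct.Up (M : INStruct W) (s : Set W) : Prop :=
  ∀ ⦃w v : W⦄, M.le w v → w ∈ s → v ∈ s

/-- `M` is an intuitionistic neighbourhood model: the order is a partial order,
the domain of every neighbourhood is upward closed, and the valuation assigns
upward closed sets to proposition letters. -/
def INStruct.IsModel (M : INStruct W) : Prop :=
  IsPartialOrder W M.le ∧ (∀ a ∈ M.N, M.Up a.dom) ∧ ∀ i, M.Up (M.V i)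

/-- Truth of a formula at a world of an intuitionistic neighbourhood model. -/
def INStruct.sat (M : INStruct W) : Formula → W → Prop
  | .prop i, w  => w ∈ M.V i
  | .bot, _     => False
  | .and φ ψ, w => M.sat φ w ∧ M.sat ψ w
  | .or φ ψ, w  => M.sat φ w ∨ M.sat ψ w
  | .imp φ ψ, w => ∀ v, M.le w v → M.sat φ v → M.sat ψ v
  | .box φ, w   => ∃ a ∈ M.N, w ∈ a.dom ∧
      ∀ w', M.le w w' → ∀ v ∈ a.val w', M.sat φ v
  | .dia φ, w   => ∀ w', M.le w w' → ∀ a ∈ M.N, w' ∈ a.dom →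
      ∃ v ∈ a.val w', M.sat φ v

/-- Semantic consequence over the class of all intuitionistic neighbourhood models. -/
def INConseq (Γ : Set Formula) (φ : Formula) : Prop :=
  ∀ (W : Type) (M : INStruct W), M.IsModel →
    ∀ w : W, (∀ ψ ∈ Γ, M.sat ψ w) → M.sat φ w

/-- A coherent intuitionistic neighbourhood: conditions (N1) and (N2). -/
def INStruct.CoherentNbhd (M : INStruct W) (a : Nbhd W) : Prop :=
  (∀ ⦃w w' : W⦄, M.le w w' → w ∈ a.dom → ∀ v ∈ a.val w, ∃ v' ∈ a.val w', M.le v v') ∧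
  (∀ ⦃w : W⦄, w ∈ a.dom → ∀ v ∈ a.val w, ∀ v', M.le v v' →
      ∃ w', M.le w w' ∧ v' ∈ a.val w')

/-- A model is coherent if all its intuitionistic neighbourhoods are coherent. -/
def INStruct.Coherent (M : INStruct W) : Prop := ∀ a ∈ M.N, M.CoherentNbhd a

/-- Semantic consequence over the class of coherent intuitionistic neighbourhood models. -/
def CohConseq (Γ : Set Formula) (φ : Formula) : Prop :=
  ∀ (W : Type) (M : INStruct W), M.IsModel → M.Coherent →
    ∀ w : W, (∀ ψ ∈ Γ, M.sat ψ w) → M.sat φ w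

/-- The relation R: w R v iff v ∈ a(w) for some neighbourhood a of w. -/
def INStruct.R (M : INStruct W) (w v : W) : Prop :=
  ∃ a ∈ M.N, w ∈ a.dom ∧ v ∈ a.val w

/-- R~-Cartesian: w ≤~ v R~ w implies w = v (with ~ the equivalence closures). -/
def INStruct.RCartesian (M : INStruct W) : Prop :=
  ∀ w v, Relation.EqvGen M.le w v → Relation.EqvGen M.R v w → w = v

/-- N-Cartesian: w R~ v and w, v ∈ dom(a) imply a(w) = a(v). -/
def INStruct.NCartesian (M : INStruct W) : Prop :=
  ∀ a ∈ M.N, ∀ w v, Relation.EqvGen M.R w v → w ∈ a.dom → v ∈ a.dom →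
    a.val w = a.val v

/-- Cartesian: both R~-Cartesian and N-Cartesian. -/
def INStruct.Cartesian (M : INStruct W) : Prop := M.RCartesian ∧ M.NCartesian

/-- Isomorphism of intuitionistic neighbourhood structures. -/
def Isomorphic (M : INStruct W) (M' : INStruct W') : Prop :=
  ∃ (α : W → W') (ν : Nbhd W → Nbhd W'),
    Function.Bijective α ∧ Set.BijOn ν M.N M'.N ∧
    (∀ w v, M.le w v ↔ M'.le (α w) (α v)) ∧
    (∀ a ∈ M.N, ∀ w, w ∈ a.dom ↔ α w ∈ (ν a).dom) ∧
    (∀ a ∈ M.N, ∀ u ∈ a.dom, ∀ w, w ∈ a.val u ↔ α w ∈ (ν a).val (α u)) ∧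
    (∀ i w, w ∈ M.V i ↔ α w ∈ M'.V i)

end IMPaper
namespace IMPaper

/-- Modal indices for the bimodal language L₂: N and ∋. -/
inductive Idx : Type
  | nb : Idx
  | el : Idx
deriving DecidableEq

/-- Formulas of the bimodal language L₂. -/
inductive Formula2 : Type
  | prop : ℕ → Formula2
  | bot  : Formula2
  | and  : Formula2 → Formula2 → Formula2
  | or   : Formula2 → Formula2 → Formula2
  | imp  : Formula2 → Formula2 → Formula2
  | box  : Idx → Formula2 → Formula2
  | dia  : Idx → Formula2 → Formula2
deriving DecidableEq

/-- Negation in L₂. -/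
def Formula2.neg (φ : Formula2) : Formula2 := φ.imp .bot

/-- Substitution in L₂. -/
def Formula2.subst (σ : ℕ → Formula2) : Formula2 → Formula2
  | .prop i   => σ i
  | .bot      => .bot
  | .and φ ψ  => .and (φ.subst σ) (ψ.subst σ)
  | .or φ ψ   => .or (φ.subst σ) (ψ.subst σ)
  | .imp φ ψ  => .imp (φ.subst σ) (ψ.subst σ)
  | .box j φ  => .box j (φ.subst σ)
  | .dia j φ  => .dia j (φ.subst σ)

private def qq0 : Formula2 := .prop 0
private def qq1 : Formula2 := .prop 1
private def qq2 : Formula2 := .prop 2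

/-- Axioms of intuitionistic propositional logic in L₂. -/
def IpcAx2 : Set Formula2 :=
  { Formula2.imp qq0 (.imp qq1 qq0),
    Formula2.imp (.imp qq0 (.imp qq1 qq2)) (.imp (.imp qq0 qq1) (.imp qq0 qq2)),
    Formula2.imp (.and qq0 qq1) qq0,
    Formula2.imp (.and qq0 qq1) qq1,
    Formula2.imp qq0 (.imp qq1 (.and qq0 qq1)),
    Formula2.imp qq0 (.or qq0 qq1),
    Formula2.imp qq1 (.or qq0 qq1),
    Formula2.imp (.imp qq0 qq2) (.imp (.imp qq1 qq2) (.imp (.or qq0 qq1) qq2)),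
    Formula2.imp .bot qq0 }

/-- The modal axioms (K□_j), (K◇_j), (C◇_j), (N◇_j) and (I◇□_j) of IK₂,
for each index j ∈ {N, ∋}. -/
def IK2Base : Set Formula2 :=
  {φ | ∃ j : Idx,
    φ = (Formula2.box j (qq0.imp qq1)).imp ((Formula2.box j qq0).imp (Formula2.box j qq1)) ∨
    φ = (Formula2.box j (qq0.imp qq1)).imp ((Formula2.dia j qq0).imp (Formula2.dia j qq1)) ∨
    φ = (Formula2.dia j (qq0.or qq1)).imp ((Formula2.dia j qq0).or (Formula2.dia j qq1)) ∨
    φ = (Formula2.dia j Formula2.bot).neg ∨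
    φ = ((Formula2.dia j qq0).imp (Formula2.box j qq1)).imp (Formula2.box j (qq0.imp qq1))}

/-- All substitution instances of a set of L₂-formulas. -/
def Instances2 (Ax : Set Formula2) : Set Formula2 :=
  {φ | ∃ ψ ∈ Ax, ∃ σ, φ = ψ.subst σ}

/-- The axiom set of IK₂: substitution instances of intuitionistic axioms and
of the modal axioms. -/
def ScrAx2 : Set Formula2 := Instances2 IpcAx2 ∪ Instances2 IK2Base

/-- The calculus IK₂ for the bimodal language L₂. -/
inductive IK2 : Set Formula2 → Formula2 → Prop
  | el {Γ : Set Formula2} {φ : Formula2} : φ ∈ Γ → IK2 Γ φ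
  | ax {Γ : Set Formula2} {φ : Formula2} : φ ∈ ScrAx2 → IK2 Γ φ
  | mp {Γ : Set Formula2} {φ ψ : Formula2} :
      IK2 Γ φ → IK2 Γ (φ.imp ψ) → IK2 Γ ψ
  | nec {Γ : Set Formula2} {φ : Formula2} (j : Idx) :
      IK2 ∅ φ → IK2 Γ (Formula2.box j φ)

/-- The modal translation (-)ᵗ : L → L₂, sending □φ to ◇_N □_∋ φᵗ and
◇φ to □_N ◇_∋ φᵗ. -/
def trans : Formula → Formula2
  | .prop i  => .prop i
  | .bot     => .bot
  | .and φ ψ => .and (trans φ) (trans ψ)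
  | .or φ ψ  => .or (trans φ) (trans ψ)
  | .imp φ ψ => .imp (trans φ) (trans ψ)
  | .box φ   => .dia .nb (.box .el (trans φ))
  | .dia φ   => .box .nb (.dia .el (trans φ))

variable {W X : Type}

/-- The data of a birelational L₂-model. -/
structure BiStruct (X : Type) where
  le : X → X → Prop
  rN : X → X → Prop
  rE : X → X → Prop
  V : ℕ → Set X

/-- `B` is a birelational L₂-model: partial order and upward closed valuation. -/
def BiStruct.IsModel (B : BiStruct X) : Prop :=
  IsPartialOrder X B.le ∧ ∀ i, ∀ ⦃x y : X⦄, B.le x y → x ∈ B.V i → y ∈ B.V i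

/-- The accessibility relation indexed by j ∈ {N, ∋}. -/
def BiStruct.rel (B : BiStruct X) : Idx → X → X → Prop
  | .nb => B.rN
  | .el => B.rE

/-- Truth at a world of a birelational L₂-model. -/
def BiStruct.sat (B : BiStruct X) : Formula2 → X → Prop
  | .prop i, x  => x ∈ B.V i
  | .bot, _     => False
  | .and φ ψ, x => B.sat φ x ∧ B.sat ψ x
  | .or φ ψ, x  => B.sat φ x ∨ B.sat ψ x
  | .imp φ ψ, x => ∀ y, B.le x y → B.sat φ y → B.sat ψ y
  | .box j φ, x => ∀ y z, B.le x y → B.rel j y z → B.sat φ z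
  | .dia j φ, x => ∃ y, B.rel j x y ∧ B.sat φ y

/-- N(W): pairs (a, w) with a ∈ N and w ∈ dom(a). -/
def INStruct.NW (M : INStruct W) : Type :=
  {q : Nbhd W × W // q.1 ∈ M.N ∧ q.2 ∈ q.1.dom}

/-- The carrier of M*: the disjoint union W ⊕ N(W). -/
def INStruct.StarW (M : INStruct W) : Type := W ⊕ M.NW

/-- The order on M*: the union of ≤ on W and ⊑ on N(W), where
(a,w) ⊑ (b,v) iff a = b and w ≤ v. -/
def INStruct.starLe (M : INStruct W) : M.StarW → M.StarW → Prop
  | .inl w, .inl v => M.le w v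
  | .inr p, .inr q => p.1.1 = q.1.1 ∧ M.le p.1.2 q.1.2
  | _, _ => False

/-- The relation R_N of M*: w R_N (a,v) iff w = v. -/
def INStruct.starRN (M : INStruct W) : M.StarW → M.StarW → Prop
  | .inl w, .inr p => w = p.1.2
  | _, _ => False

/-- The relation R_∋ of M*: (a,w) R_∋ v iff v ∈ a(w). -/
def INStruct.starRE (M : INStruct W) : M.StarW → M.StarW → Prop
  | .inr p, .inl v => v ∈ p.1.1.val p.1.2
  | _, _ => False

/-- The birelational L₂-model M* associated with a coherent intuitionistic
neighbourhood model M; no element of N(W) satisfies any proposition letter. -/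
def INStruct.star (M : INStruct W) : BiStruct M.StarW where
  le := M.starLe
  rN := M.starRN
  rE := M.starRE
  V := fun i => {x | ∃ w ∈ M.V i, x = Sum.inl w}

end IMPaper
namespace IMPaper

namespace IK2Aux

private def s3 (A B C : Formula2) : ℕ → Formula2
  | 0 => A | 1 => B | _ => C

lemma ipcInst {Γ ψ} (h : ψ ∈ IpcAx2) (σ : ℕ → Formula2) : IK2 Γ (ψ.subst σ) :=
  IK2.ax (Or.inl ⟨ψ, h, σ, rfl⟩)

lemma baseInst {Γ ψ} (h : ψ ∈ IK2Base) (σ : ℕ → Formula2) : IK2 Γ (ψ.subst σ) :=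
  IK2.ax (Or.inr ⟨ψ, h, σ, rfl⟩)

lemma axK {Γ} (A B : Formula2) : IK2 Γ (A.imp (B.imp A)) :=
  ipcInst (Or.inl rfl) (s3 A B .bot)

lemma axS {Γ} (A B C : Formula2) :
    IK2 Γ ((A.imp (B.imp C)).imp ((A.imp B).imp (A.imp C))) :=
  ipcInst (Or.inr (Or.inl rfl)) (s3 A B C)

lemma axAnd1 {Γ} (A B : Formula2) : IK2 Γ ((A.and B).imp A) :=
  ipcInst (Or.inr (Or.inr (Or.inl rfl))) (s3 A B .bot)

lemma axAnd2 {Γ} (A B : Formula2) : IK2 Γ ((A.and B).imp B) :=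
  ipcInst (Or.inr (Or.inr (Or.inr (Or.inl rfl)))) (s3 A B .bot)

lemma axKBox {Γ} (j : Idx) (A B : Formula2) :
    IK2 Γ ((Formula2.box j (A.imp B)).imp ((Formula2.box j A).imp (Formula2.box j B))) :=
  baseInst ⟨j, Or.inl rfl⟩ (s3 A B .bot)

lemma axKDia {Γ} (j : Idx) (A B : Formula2) :
    IK2 Γ ((Formula2.box j (A.imp B)).imp ((Formula2.dia j A).imp (Formula2.dia j B))) :=
  baseInst ⟨j, Or.inr (Or.inl rfl)⟩ (s3 A B .bot)

lemma axNDia {Γ} (j : Idx) : IK2 Γ ((Formula2.dia j Formula2.bot).imp .bot) :=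
  baseInst ⟨j, Or.inr (Or.inr (Or.inr (Or.inl rfl)))⟩ (s3 .bot .bot .bot)

lemma axIDiaBox {Γ} (j : Idx) (A B : Formula2) :
    IK2 Γ (((Formula2.dia j A).imp (Formula2.box j B)).imp (Formula2.box j (A.imp B))) :=
  baseInst ⟨j, Or.inr (Or.inr (Or.inr (Or.inr rfl)))⟩ (s3 A B .bot)

lemma idI {Γ} (A : Formula2) : IK2 Γ (A.imp A) :=
  IK2.mp (axK A A) (IK2.mp (axK A (A.imp A)) (axS A (A.imp A) A))

lemma mpd {Γ} {A B C : Formula2} (h1 : IK2 Γ (A.imp B)) (h2 : IK2 Γ (A.imp (B.imp C))) :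
    IK2 Γ (A.imp C) :=
  IK2.mp h1 (IK2.mp h2 (axS A B C))

lemma comp {Γ} {A B C : Formula2} (h1 : IK2 Γ (A.imp B)) (h2 : IK2 Γ (B.imp C)) :
    IK2 Γ (A.imp C) :=
  mpd h1 (IK2.mp h2 (axK (B.imp C) A))

lemma flipI {Γ} {A B C : Formula2} (h : IK2 Γ (A.imp (B.imp C))) :
    IK2 Γ (B.imp (A.imp C)) :=
  comp (axK B A) (IK2.mp h (axS A B C))

/-- ⊢ B → ((B→C)→C) -/
lemma abs {Γ} (B C : Formula2) : IK2 Γ (B.imp ((B.imp C).imp C)) :=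
  flipI (idI (B.imp C))

lemma necK {Γ} {A B : Formula2} (j : Idx) (h : IK2 ∅ (A.imp B)) :
    IK2 Γ ((Formula2.box j A).imp (Formula2.box j B)) :=
  IK2.mp (IK2.nec j h) (axKBox j A B)

lemma necKDia {Γ} {A B : Formula2} (j : Idx) (h : IK2 ∅ (A.imp B)) :
    IK2 Γ ((Formula2.dia j A).imp (Formula2.dia j B)) :=
  IK2.mp (IK2.nec j h) (axKDia j A B)

/-- translated axiom (□p ∧ ◇¬p) → ⊥ -/
lemma transAx1 (Γ : Set Formula2) (A : Formula2) :
    IK2 Γ (((Formula2.dia .nb (.box .el A)).and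
      (Formula2.box .nb (.dia .el (A.imp .bot)))).imp .bot) := by
  set nA : Formula2 := A.imp .bot
  set X : Formula2 := .dia .nb (.box .el A)
  set Y : Formula2 := .box .nb (.dia .el nA)
  set Z : Formula2 := (Formula2.dia .el nA).imp .bot
  -- ∅ ⊢ □_∋A → (◇_∋¬A → ⊥)
  have b : IK2 (∅ : Set Formula2) ((Formula2.box .el A).imp (.box .el (nA.imp .bot))) :=
    necK .el (abs A .bot)
  have c : IK2 (∅ : Set Formula2)
      ((Formula2.box .el (nA.imp .bot)).imp ((Formula2.dia .el nA).imp (.dia .el .bot))) :=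
    axKDia .el nA .bot
  have u1 : IK2 (∅ : Set Formula2) ((Formula2.box .el A).imp Z) := by
    have h1 := comp b c
    -- compose inner with ◇_∋⊥ → ⊥
    have h2 : IK2 (∅ : Set Formula2)
        (((Formula2.dia .el nA).imp (.dia .el .bot)).imp Z) := by
      have hd : IK2 (∅ : Set Formula2) ((Formula2.dia .el nA).imp
          ((Formula2.dia .el Formula2.bot).imp .bot)) :=
        IK2.mp (axNDia .el) (axK _ _)
      exact IK2.mp hd (axS (Formula2.dia .el nA) (Formula2.dia .el .bot) .bot)
    exact comp h1 h2
  have u2 : IK2 Γ (X.imp (Formula2.dia .nb Z)) := necKDia .nb u1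
  have u3 : IK2 Γ (Y.imp (Formula2.box .nb (Z.imp .bot))) :=
    necK .nb (abs (Formula2.dia .el nA) .bot)
  have u4 : IK2 Γ ((Formula2.box .nb (Z.imp .bot)).imp
      ((Formula2.dia .nb Z).imp (.dia .nb .bot))) := axKDia .nb Z .bot
  set P : Formula2 := X.and Y
  have pX : IK2 Γ (P.imp X) := axAnd1 X Y
  have pY : IK2 Γ (P.imp Y) := axAnd2 X Y
  have q1 : IK2 Γ (P.imp (Formula2.dia .nb Z)) := comp pX u2
  have q3 : IK2 Γ (P.imp ((Formula2.dia .nb Z).imp (.dia .nb .bot))) :=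
    comp (comp pY u3) u4
  have q4 : IK2 Γ (P.imp (Formula2.dia .nb .bot)) := mpd q1 q3
  exact comp q4 (axNDia .nb)

/-- translated axiom (□⊤ → ◇p) → ◇p -/
lemma transAx2 (Γ : Set Formula2) (A : Formula2) :
    IK2 Γ (((Formula2.dia .nb (.box .el (Formula2.bot.imp .bot))).imp
        (Formula2.box .nb (.dia .el A))).imp (Formula2.box .nb (.dia .el A))) := by
  set T : Formula2 := Formula2.bot.imp .bot
  have t1 : IK2 Γ (((Formula2.dia .nb (.box .el T)).imp (Formula2.box .nb (.dia .el A))).imp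
      (Formula2.box .nb ((Formula2.box .el T).imp (.dia .el A)))) :=
    axIDiaBox .nb (Formula2.box .el T) (Formula2.dia .el A)
  have hT : IK2 (∅ : Set Formula2) (Formula2.box .el T) := IK2.nec .el (idI .bot)
  have h : IK2 (∅ : Set Formula2)
      (((Formula2.box .el T).imp (.dia .el A)).imp (Formula2.dia .el A)) :=
    IK2.mp hT (abs (Formula2.box .el T) (Formula2.dia .el A))
  exact comp t1 (necK .nb h)

lemma trans_subst (σ : ℕ → Formula) (φ : Formula) :
    trans (φ.subst σ) = (trans φ).subst (fun i => trans (σ i)) := by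
  induction φ <;> simp [Formula.subst, trans, Formula2.subst, *]

end IK2Aux

theorem imc_to_ik2 (Γ : Set Formula) (φ : Formula) (h : IMC Γ φ) :
    IK2 (trans '' Γ) (trans φ) := by
  induction h with
  | el h => exact IK2.el (Set.mem_image_of_mem _ h)
  | ax h =>
    rcases h with ⟨ψ, hψ, σ, rfl⟩ | ⟨ψ, hψ, σ, rfl⟩
    · rw [IK2Aux.trans_subst]
      rcases hψ with h | h
      · subst h; exact IK2Aux.transAx1 _ _
      · rw [Set.mem_singleton_iff] at h; subst h; exact IK2Aux.transAx2 _ _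
    · rw [IK2Aux.trans_subst]
      simp only [IpcAx, Set.mem_insert_iff, Set.mem_singleton_iff] at hψ
      rcases hψ with h|h|h|h|h|h|h|h|h <;> subst h
      · exact IK2Aux.ipcInst (Or.inl rfl) _
      · exact IK2Aux.ipcInst (Or.inr (Or.inl rfl)) _
      · exact IK2Aux.ipcInst (Or.inr (Or.inr (Or.inl rfl))) _
      · exact IK2Aux.ipcInst (Or.inr (Or.inr (Or.inr (Or.inl rfl)))) _
      · exact IK2Aux.ipcInst (Or.inr (Or.inr (Or.inr (Or.inr (Or.inl rfl))))) _
      · exact IK2Aux.ipcInst (Or.inr (Or.inr (Or.inr (Or.inr (Or.inr (Or.inl rfl)))))) _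
      · exact IK2Aux.ipcInst (Or.inr (Or.inr (Or.inr (Or.inr (Or.inr (Or.inr (Or.inl rfl))))))) _
      · exact IK2Aux.ipcInst (Or.inr (Or.inr (Or.inr (Or.inr (Or.inr (Or.inr (Or.inr (Or.inl rfl)))))))) _
      · exact IK2Aux.ipcInst (Or.inr (Or.inr (Or.inr (Or.inr (Or.inr (Or.inr (Or.inr (Or.inr rfl)))))))) _
  | mp _ _ ih1 ih2 => exact IK2.mp ih1 ih2
  | monBox _ ih =>
    rw [Set.image_empty] at ih
    exact IK2Aux.necKDia .nb (IK2Aux.necK .el ih)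
  | monDia _ ih =>
    rw [Set.image_empty] at ih
    exact IK2Aux.necK .nb (IK2Aux.necKDia .el ih)


end IMPaper
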